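/- arXiv:2406.15315 — 2 statements merged into one kernel-verified Lean document; each statement's English description precedes it below -/
import Mathlib

section
/- Let V, H be Hilbert spaces with V continuously embedded in H, and 𝓛 = {ℓ₁,…,ℓ_N} ⊂ V* with completeness defect ε_𝓛 = sup{‖w‖_H : w ∈ V, ℓ_j(w)=0 ∀j, ‖w‖_V ≤ 1}. Then there exists a constant C_𝓛 > 0 such that for every w ∈ V, ‖w‖_H ≤ C_𝓛·max_{1≤j≤N}|ℓ_j(w)| + ε_𝓛·‖w‖_V. -/
/-!
Let `K` be the common kernel of the `ℓ j`. For `q ∈ K` we have `‖i q‖ ≤ ε_𝓛 ‖q‖`, so splitting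
`w = a + q` gives `‖i w‖ ≤ ‖i‖ ‖a‖ + ε_𝓛 (‖w‖ + ‖a‖)`; the infimum over `a ∈ w + K` is the quotient
norm of `w` in `V ⧸ K`. That quotient embeds into `ℝ^N` through the `ℓ j`, so it is finite
dimensional, and there its norm is dominated by `max_j |ℓ j w|`.
-/

section

variable {V H : Type*} [SeminormedAddCommGroup V] [NormedSpace ℝ V]
  [SeminormedAddCommGroup H] [NormedSpace ℝ H]

lemma norm_apply_le_sSup_mul_norm (i : V →L[ℝ] H) {K : Submodule ℝ V} {q : V} (hq : q ∈ K) :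
    ‖i q‖ ≤ sSup {r : ℝ | ∃ w ∈ K, ‖w‖ ≤ 1 ∧ r = ‖i w‖} * ‖q‖ := by
  have hbdd : BddAbove {r : ℝ | ∃ w ∈ K, ‖w‖ ≤ 1 ∧ r = ‖i w‖} := by
    refine ⟨‖i‖, ?_⟩
    rintro _ ⟨w, -, hw, rfl⟩
    exact i.le_of_opNorm_le_of_le le_rfl hw |>.trans_eq (mul_one _)
  rcases (norm_nonneg q).eq_or_lt with hq0 | hq0
  · simpa [← hq0] using i.le_opNorm q
  have hunit : ‖i (‖q‖⁻¹ • q)‖ = ‖q‖⁻¹ * ‖i q‖ := by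
    rw [map_smul, norm_smul, norm_inv, norm_norm]
  have hmem : ‖q‖⁻¹ * ‖i q‖ ∈ {r : ℝ | ∃ w ∈ K, ‖w‖ ≤ 1 ∧ r = ‖i w‖} :=
    ⟨‖q‖⁻¹ • q, K.smul_mem _ hq, by rw [norm_smul, norm_inv, norm_norm, inv_mul_cancel₀ hq0.ne'],
      hunit.symm⟩
  have := le_csSup hbdd hmem
  rwa [inv_mul_le_iff₀ hq0, mul_comm] at this

lemma norm_apply_le_mul_norm_mkQ_add {K : Submodule ℝ V} (i : V →L[ℝ] H) {ε : ℝ} (hε : 0 ≤ ε)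
    (hK : ∀ q ∈ K, ‖i q‖ ≤ ε * ‖q‖) (w : V) :
    ‖i w‖ ≤ (‖i‖ + ε) * ‖K.mkQ w‖ + ε * ‖w‖ := by
  have hnorm : ‖K.mkQ w‖ = ⨅ q : K, dist w q :=
    (QuotientAddGroup.norm_mk (S := K.toAddSubgroup) w).trans Metric.infDist_eq_iInf
  have key : ∀ q ∈ K, ‖i w‖ - ε * ‖w‖ ≤ (‖i‖ + ε) * dist w q := by
    intro q hq
    have hq' : ‖q‖ ≤ ‖w‖ + ‖w - q‖ := by
      simpa using norm_sub_le w (w - q)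
    calc ‖i w‖ - ε * ‖w‖ ≤ ‖i (w - q)‖ + ‖i q‖ - ε * ‖w‖ := by
          gcongr; simpa using norm_add_le (i (w - q)) (i q)
      _ ≤ ‖i‖ * ‖w - q‖ + ε * (‖w‖ + ‖w - q‖) - ε * ‖w‖ := by
          gcongr
          · exact i.le_opNorm _
          · exact (hK q hq).trans (by gcongr)
      _ = (‖i‖ + ε) * dist w q := by rw [dist_eq_norm]; ring
  have : ‖i w‖ - ε * ‖w‖ ≤ (‖i‖ + ε) * ‖K.mkQ w‖ := by
    rw [hnorm, Real.mul_iInf_of_nonneg (by positivity)]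
    exact le_ciInf fun q => key q q.2
  linarith

end

lemma ContinuousLinearMap.exists_norm_mkQ_ker_le {𝕜 E F : Type*} [NontriviallyNormedField 𝕜]
    [CompleteSpace 𝕜] [SeminormedAddCommGroup E] [NormedSpace 𝕜 E] [NormedAddCommGroup F]
    [NormedSpace 𝕜 F] [FiniteDimensional 𝕜 F] (f : E →L[𝕜] F) :
    ∃ c > 0, ∀ x, ‖f.ker.mkQ x‖ ≤ c * ‖f x‖ := by
  have : IsClosed (f.ker : Set E) := f.isClosed_ker
  set g := f.ker.liftQ (f : E →ₗ[𝕜] F) le_rfl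
  have hg : LinearMap.ker g = ⊥ := Submodule.ker_liftQ_eq_bot _ _ _ le_rfl
  have : FiniteDimensional 𝕜 (E ⧸ f.ker) :=
    Module.Finite.of_injective g (LinearMap.ker_eq_bot.1 hg)
  obtain ⟨c, hc0, hc⟩ := g.exists_antilipschitzWith hg
  refine ⟨c, hc0, fun x => ?_⟩
  simpa [g] using hc.le_mul_norm_sub (f.ker.mkQ x) 0

theorem stmt_8_general {V H : Type*}
    [NormedAddCommGroup V] [InnerProductSpace ℝ V]
    [NormedAddCommGroup H] [InnerProductSpace ℝ H]
    (i : V →L[ℝ] H)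
    (N : ℕ) (ℓ : Fin N → V →L[ℝ] ℝ)
    (εL : ℝ)
    (hε : εL = sSup {r : ℝ | ∃ w : V, (∀ j, ℓ j w = 0) ∧ ‖w‖ ≤ 1 ∧ r = ‖i w‖}) :
    ∃ C : ℝ, 0 < C ∧ ∀ w : V,
      ‖i w‖ ≤ C * (⨆ j : Fin N, |ℓ j w|) + εL * ‖w‖ := by
  set L : V →L[ℝ] (Fin N → ℝ) := ContinuousLinearMap.pi ℓ
  have hL : {r : ℝ | ∃ w : V, (∀ j, ℓ j w = 0) ∧ ‖w‖ ≤ 1 ∧ r = ‖i w‖} =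
      {r : ℝ | ∃ w ∈ L.ker, ‖w‖ ≤ 1 ∧ r = ‖i w‖} := by
    simp [L, funext_iff]
  rw [hL] at hε
  have hε0 : 0 ≤ εL := hε ▸ Real.sSup_nonneg fun _ ⟨_, _, _, hr⟩ => hr ▸ norm_nonneg _
  obtain ⟨c, hc0, hc⟩ := L.exists_norm_mkQ_ker_le
  refine ⟨(‖i‖ + εL) * c + 1, by positivity, fun w => ?_⟩
  set M := ⨆ j : Fin N, |ℓ j w|
  have hM0 : 0 ≤ M := Real.iSup_nonneg fun j => abs_nonneg _
  have hLw : ‖L w‖ ≤ M :=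
    (pi_norm_le_iff_of_nonneg hM0).2 fun j =>
      le_ciSup (f := fun j => |ℓ j w|) (Set.finite_range _).bddAbove j
  calc ‖i w‖ ≤ (‖i‖ + εL) * ‖L.ker.mkQ w‖ + εL * ‖w‖ :=
        norm_apply_le_mul_norm_mkQ_add i hε0 (fun q hq => hε ▸ norm_apply_le_sSup_mul_norm i hq) w
    _ ≤ (‖i‖ + εL) * c * M + εL * ‖w‖ := by
        rw [mul_assoc]; gcongr; exact (hc w).trans (by gcongr)
    _ ≤ ((‖i‖ + εL) * c + 1) * M + εL * ‖w‖ := by nlinarith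

/-- Interpolation estimate via the completeness defect:
`‖w‖_H ≤ C·max_j |ℓ_j w| + ε_𝓛 ‖w‖_V`. -/
theorem stmt_8 {V H : Type*}
    [NormedAddCommGroup V] [InnerProductSpace ℝ V] [CompleteSpace V]
    [NormedAddCommGroup H] [InnerProductSpace ℝ H] [CompleteSpace H]
    (i : V →L[ℝ] H) (hi : Function.Injective i)
    (N : ℕ) (hN : 0 < N) (ℓ : Fin N → V →L[ℝ] ℝ)
    (εL : ℝ)
    (hε : εL = sSup {r : ℝ | ∃ w : V, (∀ j, ℓ j w = 0) ∧ ‖w‖ ≤ 1 ∧ r = ‖i w‖}) :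
    ∃ C : ℝ, 0 < C ∧ ∀ w : V,
      ‖i w‖ ≤ C * (⨆ j : Fin N, |ℓ j w|) + εL * ‖w‖ :=
  stmt_8_general i N ℓ εL hε
end

section
/- Let A be positive self-adjoint with discrete spectrum on a Hilbert space H, V = D(A^{1/2}), and suppose two functions u, v ∈ C([0,∞); V) satisfy ‖u(t) − v(t)‖_H ≤ C·max_j |ℓ_j(u(t)) − ℓ_j(v(t))| + ε·‖u(t) − v(t)‖_V for all t (with fixed C, ε > 0 from Theorem on completeness defect), together with the energy inequality (d/dt)‖w‖²_H + α‖w‖²_V ≤ β‖w‖²_H for w = u − v, where α > 0, β > 0, and ε² < α/β. If ∫_t^{t+1} max_j |ℓ_j(u(τ)) − ℓ_j(v(τ))|² dτ → 0 as t → ∞, then ‖u(t) − v(t)‖_H → 0 as t → ∞. -/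
/-!
With `φ = ‖w‖²_H` and `η = max_j |ℓ_j w|`, squaring the interpolation estimate with a Young
weight and using `ε² β < α` absorbs the `V`-norm in the energy inequality, leaving
`φ' + γ φ ≤ K η²` for some `γ > 0`. The integrating factor `e^{γt}` on a unit interval gives
`φ(s+1) ≤ e^{-γ} φ(s) + K ∫_s^{s+1} η²` and `φ(t) ≤ φ(s) + K ∫_s^{s+1} η²` for `t ∈ [s, s+1]`,
and a contracting recursion whose forcing tends to zero has solutions tending to zero.
-/

open Filter MeasureTheory intervalIntegral Set Real Topology

theorem add_sq_le_weighted {t : ℝ} (ht : 0 < t) (x y : ℝ) :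
    (x + y) ^ 2 ≤ (1 + t⁻¹) * x ^ 2 + (1 + t) * y ^ 2 := by
  have key : 0 ≤ (t * y - x) ^ 2 / t := by positivity
  have expand : (t * y - x) ^ 2 / t = (1 + t⁻¹) * x ^ 2 + (1 + t) * y ^ 2 - (x + y) ^ 2 := by
    field_simp; ring
  linarith

theorem exists_pos_add_mul_sq_le_of_le_mul_add_mul {α β ε : ℝ} (hβ : 0 ≤ β)
    (hsmall : β * ε ^ 2 < α) (C : ℝ) :
    ∃ γ > 0, ∃ K ≥ 0, ∀ a b c : ℝ, 0 ≤ a → a ≤ C * b + ε * c →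
      (β + γ) * a ^ 2 ≤ α * c ^ 2 + K * b ^ 2 := by
  have hcont : Continuous fun t : ℝ => (β + t) * (1 + t) * ε ^ 2 := by fun_prop
  have hnhds : ∀ᶠ t in 𝓝 0, (β + t) * (1 + t) * ε ^ 2 < α :=
    hcont.continuousAt.eventually_lt continuousAt_const (by simpa using hsmall)
  obtain ⟨t, hsmall_t, ht : 0 < t⟩ :=
    ((hnhds.filter_mono nhdsWithin_le_nhds).and (self_mem_nhdsWithin (s := Ioi 0))).exists
  refine ⟨t, ht, (β + t) * (1 + t⁻¹) * C ^ 2, by positivity, fun a b c ha habc => ?_⟩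
  have hsq : a ^ 2 ≤ (1 + t⁻¹) * (C * b) ^ 2 + (1 + t) * (ε * c) ^ 2 :=
    (pow_le_pow_left₀ ha habc 2).trans (add_sq_le_weighted ht _ _)
  have hc : (β + t) * (1 + t) * ε ^ 2 * c ^ 2 ≤ α * c ^ 2 :=
    mul_le_mul_of_nonneg_right hsmall_t.le (sq_nonneg c)
  calc (β + t) * a ^ 2
      ≤ (β + t) * ((1 + t⁻¹) * (C * b) ^ 2 + (1 + t) * (ε * c) ^ 2) :=
        mul_le_mul_of_nonneg_left hsq (by positivity)
    _ = (β + t) * (1 + t) * ε ^ 2 * c ^ 2 + (β + t) * (1 + t⁻¹) * C ^ 2 * b ^ 2 := by ring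
    _ ≤ α * c ^ 2 + (β + t) * (1 + t⁻¹) * C ^ 2 * b ^ 2 := by linarith

theorem pi_norm_eq_iSup_norm {ι : Type*} [Fintype ι] {E : ι → Type*}
    [∀ i, SeminormedAddCommGroup (E i)] (f : ∀ i, E i) : ‖f‖ = ⨆ i, ‖f i‖ :=
  (PiLp.norm_toLp f).symm.trans (PiLp.norm_eq_ciSup _)

theorem tendsto_zero_of_le_mul_add {x b : ℕ → ℝ} {q : ℝ} (hq₀ : 0 ≤ q) (hq₁ : q < 1)
    (hx : ∀ n, 0 ≤ x n) (hrec : ∀ n, x (n + 1) ≤ q * x n + b n)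
    (hb : Tendsto b atTop (𝓝 0)) : Tendsto x atTop (𝓝 0) := by
  refine tendsto_order.2 ⟨fun a ha => Eventually.of_forall fun n => ha.trans_le (hx n),
    fun δ hδ => ?_⟩
  obtain ⟨n₀, hn₀⟩ := eventually_atTop.1
    (hb.eventually (gt_mem_nhds (by positivity : 0 < (1 - q) * (δ / 2))))
  -- past `n₀` the recursion contracts towards the fixed point `δ / 2`
  have hbound : ∀ k, x (n₀ + k) ≤ δ / 2 + q ^ k * x n₀ := by
    intro k
    induction k with
    | zero => rw [add_zero, pow_zero, one_mul]; linarith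
    | succ k ih =>
      calc x (n₀ + k + 1) ≤ q * x (n₀ + k) + b (n₀ + k) := hrec _
        _ ≤ q * (δ / 2 + q ^ k * x n₀) + (1 - q) * (δ / 2) := by
          gcongr
          exact (hn₀ _ (Nat.le_add_right _ _)).le
        _ = δ / 2 + q ^ (k + 1) * x n₀ := by ring
  have hlim : Tendsto (fun k => δ / 2 + q ^ k * x n₀) atTop (𝓝 (δ / 2)) := by
    simpa using (tendsto_pow_atTop_nhds_zero_of_lt_one hq₀ hq₁).mul_const (x n₀)
      |>.const_add (δ / 2)
  obtain ⟨k₀, hk₀⟩ := eventually_atTop.1 (hlim.eventually (gt_mem_nhds (half_lt_self hδ)))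
  refine eventually_atTop.2 ⟨n₀ + k₀, fun n hn => ?_⟩
  obtain ⟨k, rfl⟩ := Nat.exists_eq_add_of_le (le_of_add_le_left hn)
  exact (hbound k).trans_lt (hk₀ k (by omega))

theorem le_exp_mul_add_integral_of_hasDerivAt {φ φ' g : ℝ → ℝ} {γ a b : ℝ} (hγ : 0 ≤ γ)
    (hab : a ≤ b) (hφ : ∀ t ∈ Icc a b, HasDerivAt φ (φ' t) t) (hg : ContinuousOn g (Icc a b))
    (hg₀ : ∀ t ∈ Icc a b, 0 ≤ g t) (hle : ∀ t ∈ Icc a b, φ' t + γ * φ t ≤ g t) :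
    φ b ≤ exp (-(γ * (b - a))) * φ a + ∫ t in a..b, g t := by
  have hexp : ∀ t, HasDerivAt (fun s => exp (γ * s)) (exp (γ * t) * γ) t := fun t => by
    simpa using ((hasDerivAt_id t).const_mul γ).exp
  have hexpg : ContinuousOn (fun t => exp (γ * t) * g t) (Icc a b) :=
    (by fun_prop : Continuous fun t => exp (γ * t)).continuousOn.mul hg
  have hF : exp (γ * b) * φ b - exp (γ * a) * φ a ≤ ∫ t in a..b, exp (γ * t) * g t := by
    refine sub_le_integral_of_hasDeriv_right_of_le hab
      (fun t ht => ((hexp t).mul (hφ t ht)).continuousAt.continuousWithinAt)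
      (fun t ht => ((hexp t).mul (hφ t (Ioo_subset_Icc_self ht))).hasDerivWithinAt)
      hexpg.integrableOn_Icc fun t ht => ?_
    have := hle t (Ioo_subset_Icc_self ht)
    calc exp (γ * t) * γ * φ t + exp (γ * t) * φ' t = exp (γ * t) * (φ' t + γ * φ t) := by ring
      _ ≤ exp (γ * t) * g t := by gcongr
  have hmono : ∫ t in a..b, exp (γ * t) * g t ≤ exp (γ * b) * ∫ t in a..b, g t := by
    rw [← intervalIntegral.integral_const_mul]
    refine integral_mono_on hab (hexpg.intervalIntegrable_of_Icc hab)
      ((continuousOn_const.mul hg).intervalIntegrable_of_Icc hab) fun t ht => ?_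
    gcongr
    · exact hg₀ t ht
    · exact ht.2
  have hfactor : exp (γ * b) * exp (-(γ * (b - a))) = exp (γ * a) := by
    rw [← exp_add]; ring_nf
  refine le_of_mul_le_mul_left ?_ (exp_pos (γ * b))
  calc exp (γ * b) * φ b ≤ exp (γ * a) * φ a + exp (γ * b) * ∫ t in a..b, g t := by linarith
    _ = exp (γ * b) * (exp (-(γ * (b - a))) * φ a + ∫ t in a..b, g t) := by
      rw [mul_add, ← mul_assoc, hfactor]

theorem tendsto_zero_of_hasDerivAt_add_mul_le {φ φ' g : ℝ → ℝ} {γ : ℝ} (hγ : 0 < γ)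
    (hφ₀ : ∀ t, 0 ≤ φ t) (hφ : ∀ t ≥ 0, HasDerivAt φ (φ' t) t) (hg : Continuous g)
    (hg₀ : ∀ t, 0 ≤ g t) (hle : ∀ t ≥ 0, φ' t + γ * φ t ≤ g t)
    (hint : Tendsto (fun t => ∫ τ in t..(t + 1), g τ) atTop (𝓝 0)) :
    Tendsto φ atTop (𝓝 0) := by
  set J := fun t => ∫ τ in t..(t + 1), g τ
  have hstep : ∀ s ≥ (0 : ℝ), ∀ t ∈ Icc s (s + 1), φ t ≤ exp (-(γ * (t - s))) * φ s + J s := by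
    intro s hs t ht
    have hsub : Icc s t ⊆ Ici 0 := fun τ hτ => hs.trans hτ.1
    refine (le_exp_mul_add_integral_of_hasDerivAt hγ.le ht.1 (fun τ hτ => hφ τ (hsub hτ))
      hg.continuousOn (fun τ _ => hg₀ τ) fun τ hτ => hle τ (hsub hτ)).trans ?_
    gcongr
    exact integral_mono_interval le_rfl ht.1 ht.2 (Eventually.of_forall hg₀)
      (hg.intervalIntegrable _ _)
  have hnat : Tendsto (fun n : ℕ => φ n) atTop (𝓝 0) := by
    refine tendsto_zero_of_le_mul_add (exp_pos _).le (exp_lt_one_iff.2 (neg_lt_zero.2 hγ))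
      (fun n => hφ₀ n) (b := fun n : ℕ => J n) (fun n => ?_)
      (hint.comp tendsto_natCast_atTop_atTop)
    simpa using hstep n n.cast_nonneg (n + 1) ⟨by linarith, le_rfl⟩
  have hfloor : ∀ t ≥ (0 : ℝ), φ t ≤ φ ⌊t⌋₊ + J ⌊t⌋₊ := by
    intro t ht
    refine (hstep _ (Nat.cast_nonneg _) t ⟨Nat.floor_le ht, (Nat.lt_floor_add_one t).le⟩).trans ?_
    gcongr
    exact mul_le_of_le_one_left (hφ₀ _) (exp_le_one_iff.2 (by nlinarith [Nat.floor_le ht]))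
  have hupper : Tendsto (fun t : ℝ => φ ⌊t⌋₊ + J ⌊t⌋₊) atTop (𝓝 0) := by
    simpa using (hnat.comp tendsto_nat_floor_atTop).add
      ((hint.comp tendsto_natCast_atTop_atTop).comp tendsto_nat_floor_atTop)
  exact tendsto_of_tendsto_of_tendsto_of_le_of_le' tendsto_const_nhds hupper
    (Eventually.of_forall hφ₀) (eventually_ge_atTop 0 |>.mono hfloor)

theorem stmt_18_general {V H : Type*}
    [NormedAddCommGroup V] [InnerProductSpace ℝ V]
    [NormedAddCommGroup H] [InnerProductSpace ℝ H]
    (i : V →L[ℝ] H) (N : ℕ) (ℓ : Fin N → V →L[ℝ] ℝ)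
    (C ε α β : ℝ) (hβ : 0 < β)
    (hsmall : ε ^ 2 < α / β)
    (u v : ℝ → V) (hu : Continuous u) (hv : Continuous v)
    (E' : ℝ → ℝ)
    (hE : ∀ t ≥ (0:ℝ), HasDerivAt (fun s => ‖i (u s - v s)‖ ^ 2) (E' t) t)
    (henergy : ∀ t ≥ (0:ℝ),
      E' t + α * ‖u t - v t‖ ^ 2 ≤ β * ‖i (u t - v t)‖ ^ 2)
    (hinterp : ∀ t ≥ (0:ℝ),
      ‖i (u t - v t)‖ ≤ C * (⨆ j : Fin N, |ℓ j (u t - v t)|)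
        + ε * ‖u t - v t‖)
    (hconv : Tendsto
      (fun t => ∫ s in t..(t + 1), (⨆ j : Fin N, |ℓ j (u s) - ℓ j (v s)|) ^ 2)
      atTop (nhds 0)) :
    Tendsto (fun t => ‖i (u t - v t)‖) atTop (nhds 0) := by
  -- `η(w) = max_j |ℓ_j w|` is the sup norm of `(ℓ_j w)_j ∈ ℝ^N`
  set L : V →L[ℝ] (Fin N → ℝ) := ContinuousLinearMap.pi ℓ
  have hη : ∀ x, (⨆ j, |ℓ j x|) = ‖L x‖ := fun x => by
    simp [L, pi_norm_eq_iSup_norm]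
  have hconvL : Tendsto (fun t => ∫ s in t..(t + 1), ‖L (u s - v s)‖ ^ 2) atTop (𝓝 0) := by
    simpa only [← map_sub, hη] using hconv
  have hβε : β * ε ^ 2 < α := by rw [lt_div_iff₀ hβ] at hsmall; linarith
  obtain ⟨γ, hγ, K, hK, habsorb⟩ := exists_pos_add_mul_sq_le_of_le_mul_add_mul hβ.le hβε C
  have hdecay : Tendsto (fun t => ‖i (u t - v t)‖ ^ 2) atTop (𝓝 0) := by
    refine tendsto_zero_of_hasDerivAt_add_mul_le hγ (fun t => by positivity) hE
      (g := fun t => K * ‖L (u t - v t)‖ ^ 2) (by fun_prop) (fun t => by positivity)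
      (fun t ht => ?_) ?_
    · have := habsorb _ _ _ (norm_nonneg _) ((hη _).symm ▸ hinterp t ht)
      linarith [henergy t ht]
    · simpa only [intervalIntegral.integral_const_mul, mul_zero] using hconvL.const_mul K
  simpa [Real.sqrt_sq (norm_nonneg _)] using hdecay.sqrt

/-- Asymptotically determining functionals: if the interpolation estimate with
small defect and the energy inequality hold, and the functionals of the
difference of two solutions converge in the averaged sense, then the
difference tends to zero in `H`. -/
theorem stmt_18 {V H : Type*}
    [NormedAddCommGroup V] [InnerProductSpace ℝ V] [CompleteSpace V]
    [NormedAddCommGroup H] [InnerProductSpace ℝ H] [CompleteSpace H]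
    (i : V →L[ℝ] H) (N : ℕ) (hN : 0 < N) (ℓ : Fin N → V →L[ℝ] ℝ)
    (C ε α β : ℝ) (hC : 0 < C) (hεpos : 0 < ε) (hα : 0 < α) (hβ : 0 < β)
    (hsmall : ε ^ 2 < α / β)
    (u v : ℝ → V) (hu : Continuous u) (hv : Continuous v)
    (E' : ℝ → ℝ)
    (hE : ∀ t ≥ (0:ℝ), HasDerivAt (fun s => ‖i (u s - v s)‖ ^ 2) (E' t) t)
    (henergy : ∀ t ≥ (0:ℝ),
      E' t + α * ‖u t - v t‖ ^ 2 ≤ β * ‖i (u t - v t)‖ ^ 2)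
    (hinterp : ∀ t ≥ (0:ℝ),
      ‖i (u t - v t)‖ ≤ C * (⨆ j : Fin N, |ℓ j (u t - v t)|)
        + ε * ‖u t - v t‖)
    (hconv : Tendsto
      (fun t => ∫ s in t..(t + 1), (⨆ j : Fin N, |ℓ j (u s) - ℓ j (v s)|) ^ 2)
      atTop (nhds 0)) :
    Tendsto (fun t => ‖i (u t - v t)‖) atTop (nhds 0) :=
  stmt_18_general i N ℓ C ε α β hβ hsmall u v hu hv E' hE henergy hinterp hconv
end
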